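/- Let G₁ be the group with presentation ⟨a, b, c, d | b⁻¹a²b = a³, c⁻¹a³c = a⁵, d⁻¹a⁵d = a², bc = cb, cd = dc, db = bd⟩. Then G₁ is metabelian, and the assignments a ↦ a³⁰, b ↦ b, c ↦ c, d ↦ d determine an automorphism of G₁. -/

import Mathlib

universe u v
open CategoryTheory

/-! ### Group homology via the left derived functors of coinvariants -/

section HomologyDefs

variable (k G : Type u) [CommRing k] [Group G]

/-- The submodule of a representation generated by the elements `g • a - a`. -/
noncomputable def augSubmodule (A : Rep.{u} k G) : Submodule k A :=
  Submodule.span k {x : A | ∃ (g : G) (a : A), A.ρ g a - a = x}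

theorem augSubmodule_le_comap {A B : Rep.{u} k G} (f : A ⟶ B) :
    augSubmodule k G A ≤ (augSubmodule k G B).comap f.hom.toLinearMap := by
  rw [augSubmodule, Submodule.span_le]
  rintro x ⟨g, a, rfl⟩
  simp only [SetLike.mem_coe, Submodule.mem_comap, map_sub]
  refine Submodule.subset_span ?_
  exact ⟨g, f.hom a, by rw [← Rep.hom_comm_apply]; rfl⟩

/-- The coinvariants functor `Rep k G ⥤ ModuleCat k`, sending `M` to `M_G`. -/
noncomputable def coinvariantsFunctor : Rep.{u} k G ⥤ ModuleCat k where
  obj A := ModuleCat.of k (A ⧸ augSubmodule k G A)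
  map {A B} f := ModuleCat.ofHom
    (Submodule.mapQ _ _ f.hom.toLinearMap (augSubmodule_le_comap k G f))
  map_id A := by
    apply ModuleCat.hom_ext
    apply Submodule.linearMap_qext
    rfl
  map_comp f g := by
    apply ModuleCat.hom_ext
    apply Submodule.linearMap_qext
    rfl

noncomputable instance : (coinvariantsFunctor k G).Additive where
  map_add := by
    intro X Y f g
    apply ModuleCat.hom_ext
    apply Submodule.linearMap_qext
    rfl

/-- The `n`-th group homology `H_n(G, A)`, defined as the value at `A` of the `n`-th left
derived functor of the coinvariants functor. -/
noncomputable def groupHomology' (A : Rep.{u} k G) (n : ℕ) : ModuleCat k :=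
  (Functor.leftDerived (coinvariantsFunctor k G) n).obj A

/-- The homological dimension `hd_k(G)`: the least `m` such that `H_{m+1}(G, M) = 0` for all
`kG`-modules `M` (`∞` if there is no such `m`). -/
noncomputable def hdim : ℕ∞ :=
  sInf {e : ℕ∞ | ∃ m : ℕ, e = m ∧ ∀ A : Rep.{u} k G, Subsingleton (groupHomology' k G A (m + 1))}

/-- The cohomological dimension `cd_k(G)`: the least `m` such that `H^{m+1}(G, M) = 0` for all
`kG`-modules `M` (`∞` if there is no such `m`). -/
noncomputable def cdim : ℕ∞ :=
  sInf {e : ℕ∞ | ∃ m : ℕ, e = m ∧ ∀ A : Rep.{u} k G, Subsingleton (groupCohomology A (m + 1))}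

end HomologyDefs

/-- The `k`-finite-dimensional homological dimension
`fdhd_k(G) = sup {n | H_n(G,M) ≠ 0 for some kG-module M with dim_k M < ∞}`. -/
noncomputable def fdhdim (k G : Type u) [Field k] [Group G] : ℕ∞ :=
  sSup {e : ℕ∞ | ∃ (n : ℕ) (A : Rep.{u} k G), e = n ∧ FiniteDimensional k A ∧
    Nontrivial (groupHomology' k G A n)}

/-! ### Series and classes of groups -/

/-- `Q` is (isomorphic to) the quotient `K/H` of the pair of subgroups `H ≤ K`. -/
def IsQuotientOfPair {G : Type u} [Group G] (H K : Subgroup G) (Q : Type u) [Group Q] : Prop :=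
  H ≤ K ∧ ∃ φ : ↥K →* Q, Function.Surjective φ ∧ φ.ker = H.subgroupOf K

/-- A group is locally finite if every finitely generated subgroup is finite. -/
def IsLocallyFiniteGroup (Q : Type*) [Group Q] : Prop :=
  ∀ S : Subgroup Q, S.FG → Finite S

/-- A group is infinite cyclic if it is isomorphic to `ℤ`. -/
def IsInfiniteCyclic (Q : Type*) [Group Q] : Prop :=
  Nonempty (Q ≃* Multiplicative ℤ)

/-- A group is quasicyclic (Prüfer) of type `p` if it is an infinite, locally cyclic `p`-group. -/
def IsQuasicyclic (p : ℕ) (Q : Type*) [Group Q] : Prop :=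
  p.Prime ∧ Infinite Q ∧ (∀ S : Subgroup Q, S.FG → IsCyclic S) ∧
    ∀ x : Q, ∃ n : ℕ, x ^ (p ^ n) = 1

/-- `G` has a finite subnormal series all of whose factors satisfy `P`. -/
def HasSeriesWith (G : Type u) [Group G] (P : (Q : Type u) → [inst : Group Q] → Prop) : Prop :=
  ∃ (r : ℕ) (f : Fin (r + 1) → Subgroup G), f 0 = ⊥ ∧ f (Fin.last r) = ⊤ ∧
    ∀ i : Fin r, ∃ (Q : Type u) (_ : Group Q),
      IsQuotientOfPair (f i.castSucc) (f i.succ) Q ∧ P Q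

/-- `G` has a finite subnormal series with factors locally finite or infinite cyclic, with
exactly `n` infinite cyclic factors. -/
def HasHirschSeries (G : Type u) [Group G] (n : ℕ) : Prop :=
  ∃ (r : ℕ) (f : Fin (r + 1) → Subgroup G) (c : Fin r → Bool),
    f 0 = ⊥ ∧ f (Fin.last r) = ⊤ ∧
    (∀ i : Fin r, ∃ (Q : Type u) (_ : Group Q),
      IsQuotientOfPair (f i.castSucc) (f i.succ) Q ∧
        (if c i then IsInfiniteCyclic Q else IsLocallyFiniteGroup Q)) ∧
    (Finset.univ.filter fun i => c i = true).card = n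

/-- The Hirsch length of a group, `∞` if the group has no series as above. -/
noncomputable def hirschLength (G : Type u) [Group G] : ℕ∞ :=
  sInf {e : ℕ∞ | ∃ n : ℕ, e = n ∧ HasHirschSeries G n}

/-- A group is polycyclic if it has a finite subnormal series with cyclic factors. -/
def IsPolycyclic (G : Type u) [Group G] : Prop :=
  HasSeriesWith G fun Q _ => IsCyclic Q

/-- A group is polycyclic-by-finite if it has a normal polycyclic subgroup of finite index. -/
def IsPolycyclicByFinite (G : Type u) [Group G] : Prop :=
  ∃ P : Subgroup G, P.Normal ∧ IsPolycyclic ↥P ∧ P.FiniteIndex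

/-- A group is an (elementary amenable) minimax group if it has a finite subnormal series
whose factors are cyclic, quasicyclic or finite. -/
def IsMinimax (G : Type u) [Group G] : Prop :=
  HasSeriesWith G fun Q _ => IsCyclic Q ∨ (∃ p : ℕ, IsQuasicyclic p Q) ∨ Finite Q

/-- `G` has no `k`-torsion: the order of every finite subgroup of `G` is invertible in `k`. -/
def HasNoTorsionOver (k : Type u) [CommRing k] (G : Type v) [Group G] : Prop :=
  ∀ H : Subgroup G, Finite H → IsUnit ((Nat.card H : k))

/-- The class of elementary amenable groups: the smallest class of groups containing all finite
groups and all abelian groups, closed under isomorphism, extensions and directed unions. -/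
inductive IsElementaryAmenable : (G : Type u) → [inst : Group G] → Prop
  | of_finite (G : Type u) [Group G] : Finite G → IsElementaryAmenable G
  | of_abelian (G : Type u) [Group G] : (∀ a b : G, a * b = b * a) → IsElementaryAmenable G
  | of_mulEquiv {G H : Type u} [Group G] [Group H] :
      IsElementaryAmenable G → (G ≃* H) → IsElementaryAmenable H
  | extension (G : Type u) [Group G] (N : Subgroup G) (hN : N.Normal) :
      IsElementaryAmenable ↥N →
      (@IsElementaryAmenable (G ⧸ N) (@QuotientGroup.Quotient.group G _ N hN)) →
      IsElementaryAmenable G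
  | directed_union (G : Type u) [Group G] (ι : Type u) (s : ι → Subgroup G) :
      Directed (· ≤ ·) s → iSup s = ⊤ → (∀ i, IsElementaryAmenable ↥(s i)) →
      IsElementaryAmenable G

/-- The class of constructible groups: groups built up from the trivial group by finitely many
ascending HNN-extensions and finite extensions. -/
inductive IsConstructible : (G : Type u) → [inst : Group G] → Prop
  | of_subsingleton (G : Type u) [Group G] : Subsingleton G → IsConstructible G
  | of_mulEquiv {G H : Type u} [Group G] [Group H] :
      IsConstructible G → (G ≃* H) → IsConstructible H
  | ascending_hnn (B : Type u) [Group B] (A : Subgroup B) (φ : (⊤ : Subgroup B) ≃* A) :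
      IsConstructible B → IsConstructible (HNNExtension B ⊤ A φ)
  | finite_extension (G : Type u) [Group G] (N : Subgroup G) (hN : N.Normal) :
      IsConstructible ↥N → Finite (G ⧸ N) → IsConstructible G

/-- A group is metabelian if its derived subgroup is abelian. -/
def IsMetabelian (G : Type*) [Group G] : Prop :=
  ∀ x y : ↥(commutator G), x * y = y * x

/-- `G` is the colimit of a filtered system of groups all of which satisfy `P`. -/
def IsFilteredColimitOfGroupsWith (G : Type u) [Group G]
    (P : (H : Type u) → [inst : Group H] → Prop) : Prop :=
  ∃ (J : Type u) (_ : SmallCategory J) (_ : IsFiltered J) (F : J ⥤ GrpCat.{u})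
    (c : Limits.Cocone F), Nonempty (Limits.IsColimit c) ∧ (∀ j, P ↥(F.obj j)) ∧
      Nonempty (↥(c.pt) ≃* G)

/-- `G`, equipped with the maps `ι n : B → G`, is the colimit of the sequence
`B →φ B →φ B →φ ⋯`. -/
def IsColimitOfSequence {B : Type u} [Group B] (φ : B →* B) (G : Type u) [Group G]
    (ι : ℕ → (B →* G)) : Prop :=
  (∀ n, (ι (n + 1)).comp φ = ι n) ∧
    ∀ (H : Type u) (_ : Group H) (ψ : ℕ → (B →* H)), (∀ n, (ψ (n + 1)).comp φ = ψ n) →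
      ∃! χ : G →* H, ∀ n, χ.comp (ι n) = ψ n

/-- The trivial module `k` over the group algebra `kG`. -/
def TrivialModule (k G : Type u) [CommRing k] [Group G] : Type u := k

noncomputable instance (k G : Type u) [CommRing k] [Group G] :
    AddCommGroup (TrivialModule k G) := inferInstanceAs (AddCommGroup k)

noncomputable instance (k G : Type u) [CommRing k] [Group G] :
    Module (MonoidAlgebra k G) (TrivialModule k G) :=
  Module.compHom k ((MonoidAlgebra.lift k k G 1).toRingHom)

/-- `G` is of type `FP` over `k`: the trivial `kG`-module `k` has a projective resolution of
finite length by finitely generated projective `kG`-modules. -/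
def IsTypeFP (k G : Type u) [CommRing k] [Group G] : Prop :=
  ∃ (P : ProjectiveResolution (ModuleCat.of (MonoidAlgebra k G) (TrivialModule k G))) (n : ℕ),
    (∀ i, n < i → Limits.IsZero (P.complex.X i)) ∧
    ∀ i, Module.Finite (MonoidAlgebra k G) (P.complex.X i)

/-- A group is residually finite if every nontrivial element survives in some finite quotient. -/
def IsResiduallyFiniteGroup (G : Type*) [Group G] : Prop :=
  ∀ g : G, g ≠ 1 → ∃ H : Subgroup G, H.Normal ∧ H.FiniteIndex ∧ g ∉ H

/-- A group is nilpotent-by-polycyclic-by-finite if it has a normal nilpotent subgroup `N`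
such that `G/N` is polycyclic-by-finite. -/
def IsNilpotentByPolycyclicByFinite (G : Type u) [Group G] : Prop :=
  ∃ (N : Subgroup G) (hN : N.Normal), Group.IsNilpotent ↥N ∧
    @IsPolycyclicByFinite (G ⧸ N) (@QuotientGroup.Quotient.group G _ N hN)

/-- Data of a subnormal series of `G` witnessing that `G` is a soluble minimax group (all factors
are cyclic or quasicyclic), with exactly `h` infinite cyclic factors and exactly `mp` factors
isomorphic to the Prüfer group `C_{p^∞}`. -/
def HasSolubleMinimaxData (G : Type u) [Group G] (p : ℕ) (h mp : ℕ) : Prop :=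
  ∃ (r : ℕ) (f : Fin (r + 1) → Subgroup G) (c : Fin r → Fin 4),
    f 0 = ⊥ ∧ f (Fin.last r) = ⊤ ∧
    (∀ i : Fin r, ∃ (Q : Type u) (_ : Group Q),
      IsQuotientOfPair (f i.castSucc) (f i.succ) Q ∧
      (c i = 0 → IsCyclic Q ∧ Finite Q) ∧
      (c i = 1 → IsInfiniteCyclic Q) ∧
      (c i = 2 → IsQuasicyclic p Q) ∧
      (c i = 3 → ∃ q : ℕ, q ≠ p ∧ IsQuasicyclic q Q)) ∧
    (Finset.univ.filter fun i => c i = 1).card = h ∧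
    (Finset.univ.filter fun i => c i = 2).card = mp

/-- The relators of the group
`G₁ = ⟨a,b,c,d | b⁻¹a²b = a³, c⁻¹a³c = a⁵, d⁻¹a⁵d = a², bc = cb, cd = dc, db = bd⟩`,
with `a, b, c, d` the generators indexed by `0, 1, 2, 3`. -/
def G1Rels : Set (FreeGroup (Fin 4)) :=
  { (FreeGroup.of 1)⁻¹ * (FreeGroup.of 0) ^ 2 * FreeGroup.of 1 * ((FreeGroup.of 0) ^ 3)⁻¹,
    (FreeGroup.of 2)⁻¹ * (FreeGroup.of 0) ^ 3 * FreeGroup.of 2 * ((FreeGroup.of 0) ^ 5)⁻¹,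
    (FreeGroup.of 3)⁻¹ * (FreeGroup.of 0) ^ 5 * FreeGroup.of 3 * ((FreeGroup.of 0) ^ 2)⁻¹,
    FreeGroup.of 1 * FreeGroup.of 2 * (FreeGroup.of 2 * FreeGroup.of 1)⁻¹,
    FreeGroup.of 2 * FreeGroup.of 3 * (FreeGroup.of 3 * FreeGroup.of 2)⁻¹,
    FreeGroup.of 3 * FreeGroup.of 1 * (FreeGroup.of 1 * FreeGroup.of 3)⁻¹ }

/-!
Heuristically `G₁ = ℤ[1/30] ⋊ ℤ³`, with `a = 1` and `b`, `c`, `d` acting by multiplication by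
`3/2`, `5/3`, `2/5`. The conjugate `aConj p q = (b ^ p * c ^ q)⁻¹ * a * (b ^ p * c ^ q)` plays
the role of `(3/2) ^ p * (5/3) ^ q`, and the relations of `G₁` turn into
`aConj (p+1) q ^ 2 = aConj p q ^ 3`, `aConj p (q+1) ^ 3 = aConj p q ^ 5` and
`aConj (p+1) (q+1) ^ 2 = aConj p q ^ 5`. Since `z` commutes with `x` as soon as it commutes with
two coprime powers of `x`, these relations force the conjugates of `a` that we need to commute.
An explicit word in them is then a 30th root of `a` satisfying the same relations as `a`, so
`a ↦ a³⁰` has an inverse endomorphism and is an automorphism `φ`.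

For metabelianness, the elements `x` with `φⁿ x ∈ ⟨a⟩` for some `n` form a subgroup `U`, abelian
because `φ` is injective, and normal because conjugating `a³⁰` by `b^±1`, `c^±1`, `d^±1` gives a
power of `a`. As `a ∈ U` and `b`, `c`, `d` commute, `G₁/U` is abelian, so `[G₁, G₁] ≤ U`.
-/

section GroupLemmas

variable {G : Type*} [Group G]

theorem Subgroup.mem_of_pow_mem_of_coprime {H : Subgroup G} {x : G} {m n : ℕ}
    (hmn : m.Coprime n) (hm : x ^ m ∈ H) (hn : x ^ n ∈ H) : x ∈ H := by
  have bezout : ((1 : ℕ) : ℤ) = m * m.gcdA n + n * m.gcdB n :=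
    hmn.gcd_eq_one ▸ Nat.gcd_eq_gcd_ab m n
  have hx : x = (x ^ m) ^ m.gcdA n * (x ^ n) ^ m.gcdB n := by
    rw [← zpow_natCast, ← zpow_natCast x n, ← zpow_mul, ← zpow_mul, ← zpow_add, ← bezout,
      Nat.cast_one, zpow_one]
  rw [hx]
  exact mul_mem (zpow_mem hm _) (zpow_mem hn _)

theorem Commute.of_pow_of_pow_of_coprime {x z : G} {m n : ℕ} (hmn : m.Coprime n)
    (hm : Commute z (x ^ m)) (hn : Commute z (x ^ n)) : Commute z x :=
  (Subgroup.mem_centralizer_singleton_iff.mp <| Subgroup.mem_of_pow_mem_of_coprime hmn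
    (Subgroup.mem_centralizer_singleton_iff.mpr hm.symm)
    (Subgroup.mem_centralizer_singleton_iff.mpr hn.symm)).symm

theorem pairwise_commute_of_pow_relations {x y z : G} (hy : y ^ 2 = x ^ 3) (hz : z ^ 2 = x ^ 5)
    (hzy : z ^ 3 = y ^ 5) : Commute x y ∧ Commute x z ∧ Commute y z := by
  have hy₅x : Commute (y ^ 5) x := by
    refine .of_pow_of_pow_of_coprime (m := 6) (n := 5) (by norm_num) ?_ ?_
    · rw [show x ^ 6 = y ^ 4 by rw [show 4 = 2 * 2 from rfl, pow_mul, hy, ← pow_mul]]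
      exact Commute.pow_pow_self y 5 4
    · rw [← hzy, ← hz]
      exact Commute.pow_pow_self z 3 2
  have hxy : Commute x y :=
    .of_pow_of_pow_of_coprime (m := 2) (n := 5) (by norm_num) (hy ▸ .pow_right (.refl x) 3)
      hy₅x.symm
  have hxz : Commute x z :=
    .of_pow_of_pow_of_coprime (m := 2) (n := 3) (by norm_num) (hz ▸ .pow_right (.refl x) 5)
      (hzy ▸ hxy.pow_right 5)
  have hyz : Commute y z :=
    .of_pow_of_pow_of_coprime (m := 2) (n := 3) (by norm_num) (hz ▸ hxy.symm.pow_right 5)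
      (hzy ▸ .pow_right (.refl y) 5)
  exact ⟨hxy, hxz, hyz⟩

theorem mul_inv_mul_sq_inv_pow {x y z : G} (hxy : Commute x y) (hxz : Commute x z)
    (hyz : Commute y z) (n : ℕ) :
    (x * y⁻¹ * (z ^ 2)⁻¹) ^ n = x ^ n * (y ^ n)⁻¹ * ((z ^ n) ^ 2)⁻¹ := by
  rw [((hxz.mul_left hyz.inv_left).pow_right 2).inv_right.mul_pow, hxy.inv_right.mul_pow,
    inv_pow, inv_pow, pow_right_comm]

theorem inv_mul_mul_pow (g x : G) (n : ℕ) : (g⁻¹ * x * g) ^ n = g⁻¹ * x ^ n * g := by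
  simpa using conj_pow (a := g⁻¹) (b := x) (i := n)

theorem inv_mul_pow_pow_mul {g x : G} {m n : ℕ} (h : g⁻¹ * x ^ m * g = x ^ n) (k : ℕ) :
    g⁻¹ * (x ^ k) ^ m * g = (x ^ k) ^ n := by
  rw [pow_right_comm, ← inv_mul_mul_pow, h, pow_right_comm]

theorem conj_pow_mem_zpowers {g x : G} {m n k : ℕ} (h : g⁻¹ * x ^ m * g = x ^ n) (hm : m ∣ k)
    (hn : n ∣ k) : g⁻¹ * x ^ k * g ∈ Subgroup.zpowers x ∧ g * x ^ k * g⁻¹ ∈ Subgroup.zpowers x := by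
  obtain ⟨i, rfl⟩ := hm
  obtain ⟨j, hj⟩ := hn
  have h' : g * x ^ n * g⁻¹ = x ^ m := by rw [← h]; group
  constructor
  · rw [pow_mul, ← inv_mul_mul_pow, h, ← pow_mul]
    exact Subgroup.npow_mem_zpowers x _
  · rw [hj, pow_mul, ← conj_pow, h', ← pow_mul]
    exact Subgroup.npow_mem_zpowers x _

theorem isMetabelian_of_commutator_le {N : Subgroup G} (hN : ∀ x ∈ N, ∀ y ∈ N, Commute x y)
    (h : commutator G ≤ N) : IsMetabelian G :=
  fun x y => Subtype.ext (hN _ (h x.2) _ (h y.2)).eq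

end GroupLemmas

section IteratedPreimage

variable {G : Type*} [Group G] {φ : G →* G} {a : G}

variable (φ a) in
def zpowersIterPreimage : Subgroup G :=
  ⨆ n : ℕ, (Subgroup.zpowers a).comap ((show Monoid.End G from φ) ^ n)

theorem iterate_mem_zpowers (hφa : φ a ∈ Subgroup.zpowers a) {x : G}
    (hx : x ∈ Subgroup.zpowers a) (n : ℕ) : φ^[n] x ∈ Subgroup.zpowers a := by
  induction n with
  | zero => exact hx
  | succ n ih =>
    rw [Function.iterate_succ_apply']
    exact (Subgroup.zpowers_le (H := (Subgroup.zpowers a).comap φ)).mpr hφa ih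

theorem mem_zpowersIterPreimage_iff (hφa : φ a ∈ Subgroup.zpowers a) {x : G} :
    x ∈ zpowersIterPreimage φ a ↔ ∃ n, φ^[n] x ∈ Subgroup.zpowers a := by
  refine Subgroup.mem_iSup_of_directed (Monotone.directed_le ?_)
  refine monotone_nat_of_le_succ fun n x (hx : φ^[n] x ∈ Subgroup.zpowers a) => ?_
  change φ^[n + 1] x ∈ Subgroup.zpowers a
  rw [Function.iterate_succ_apply']
  exact iterate_mem_zpowers hφa hx 1

theorem commute_of_mem_zpowersIterPreimage (hφa : φ a ∈ Subgroup.zpowers a)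
    (hφ : Function.Injective φ) {x y : G} (hx : x ∈ zpowersIterPreimage φ a)
    (hy : y ∈ zpowersIterPreimage φ a) : Commute x y := by
  obtain ⟨m, hm⟩ := (mem_zpowersIterPreimage_iff hφa).mp hx
  obtain ⟨n, hn⟩ := (mem_zpowersIterPreimage_iff hφa).mp hy
  obtain ⟨i, hi⟩ := Subgroup.mem_zpowers_iff.mp (iterate_mem_zpowers hφa hm n)
  obtain ⟨j, hj⟩ := Subgroup.mem_zpowers_iff.mp (iterate_mem_zpowers hφa hn m)
  rw [← Function.iterate_add_apply] at hi hj
  refine hφ.iterate (n + m) ?_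
  rw [iterate_map_mul, iterate_map_mul, ← hi, add_comm, ← hj]
  exact (Commute.zpow_zpow_self a i j).eq

theorem mul_mul_inv_mem_zpowersIterPreimage (hφa : φ a ∈ Subgroup.zpowers a) {g : G}
    (hg : φ g = g) (hga : g * φ a * g⁻¹ ∈ Subgroup.zpowers a) {x : G}
    (hx : x ∈ zpowersIterPreimage φ a) : g * x * g⁻¹ ∈ zpowersIterPreimage φ a := by
  obtain ⟨n, hn⟩ := (mem_zpowersIterPreimage_iff hφa).mp hx
  obtain ⟨k, hk⟩ := Subgroup.mem_zpowers_iff.mp hn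
  refine (mem_zpowersIterPreimage_iff hφa).mpr ⟨n + 1, ?_⟩
  rw [iterate_map_mul, iterate_map_mul, iterate_map_inv, Function.iterate_fixed hg,
    Function.iterate_succ_apply', ← hk, map_zpow, ← conj_zpow]
  exact zpow_mem hga k

theorem mem_normalizer_zpowersIterPreimage (hφa : φ a ∈ Subgroup.zpowers a) {g : G}
    (hg : φ g = g) (h₁ : g * φ a * g⁻¹ ∈ Subgroup.zpowers a)
    (h₂ : g⁻¹ * φ a * g ∈ Subgroup.zpowers a) :
    g ∈ Subgroup.normalizer (zpowersIterPreimage φ a : Set G) := by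
  refine Subgroup.mem_normalizer_iff.mpr fun x =>
    ⟨mul_mul_inv_mem_zpowersIterPreimage hφa hg h₁, fun hx => ?_⟩
  simpa [mul_assoc] using mul_mul_inv_mem_zpowersIterPreimage hφa (g := g⁻¹)
    (by rw [map_inv, hg]) (by rwa [inv_inv]) hx

end IteratedPreimage

abbrev G₁ := PresentedGroup G1Rels

namespace G₁

def a : G₁ := PresentedGroup.of 0
def b : G₁ := PresentedGroup.of 1
def c : G₁ := PresentedGroup.of 2
def d : G₁ := PresentedGroup.of 3

theorem b_inv_mul_a_sq_mul_b : b⁻¹ * a ^ 2 * b = a ^ 3 :=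
  PresentedGroup.mk_eq_mk_of_mul_inv_mem (by simp [G1Rels])

theorem c_inv_mul_a_cube_mul_c : c⁻¹ * a ^ 3 * c = a ^ 5 :=
  PresentedGroup.mk_eq_mk_of_mul_inv_mem (by simp [G1Rels])

theorem d_inv_mul_a_pow_five_mul_d : d⁻¹ * a ^ 5 * d = a ^ 2 :=
  PresentedGroup.mk_eq_mk_of_mul_inv_mem (by simp [G1Rels])

theorem commute_b_c : Commute b c :=
  PresentedGroup.mk_eq_mk_of_mul_inv_mem (by simp [G1Rels])

theorem commute_c_d : Commute c d :=
  PresentedGroup.mk_eq_mk_of_mul_inv_mem (by simp [G1Rels])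

theorem commute_d_b : Commute d b :=
  PresentedGroup.mk_eq_mk_of_mul_inv_mem (by simp [G1Rels])

section Lift

variable {H : Type*} [Group H] {α β γ δ : H} (h₁ : β⁻¹ * α ^ 2 * β = α ^ 3)
  (h₂ : γ⁻¹ * α ^ 3 * γ = α ^ 5) (h₃ : δ⁻¹ * α ^ 5 * δ = α ^ 2) (h₄ : Commute β γ)
  (h₅ : Commute γ δ) (h₆ : Commute δ β)

def lift : G₁ →* H :=
  PresentedGroup.toGroup (f := ![α, β, γ, δ]) <| by
    simp only [G1Rels, Set.mem_insert_iff, Set.mem_singleton_iff]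
    rintro r (rfl | rfl | rfl | rfl | rfl | rfl) <;> simp [*, h₄.eq, h₅.eq, h₆.eq]

@[simp] theorem lift_a : lift h₁ h₂ h₃ h₄ h₅ h₆ a = α := PresentedGroup.toGroup.of _
@[simp] theorem lift_b : lift h₁ h₂ h₃ h₄ h₅ h₆ b = β := PresentedGroup.toGroup.of _
@[simp] theorem lift_c : lift h₁ h₂ h₃ h₄ h₅ h₆ c = γ := PresentedGroup.toGroup.of _
@[simp] theorem lift_d : lift h₁ h₂ h₃ h₄ h₅ h₆ d = δ := PresentedGroup.toGroup.of _

end Lift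

theorem hom_ext {H : Type*} [Group H] {f g : G₁ →* H} (ha : f a = g a) (hb : f b = g b)
    (hc : f c = g c) (hd : f d = g d) : f = g :=
  PresentedGroup.ext fun i => by fin_cases i <;> assumption

def aConj (p q : ℤ) : G₁ := (b ^ p * c ^ q)⁻¹ * a * (b ^ p * c ^ q)

@[simp] theorem aConj_zero_zero : aConj 0 0 = a := by simp [aConj]

theorem aConj_add (p q r s : ℤ) :
    aConj (p + r) (q + s) = (b ^ p * c ^ q)⁻¹ * aConj r s * (b ^ p * c ^ q) := by
  have hw : b ^ (p + r) * c ^ (q + s) = b ^ r * c ^ s * (b ^ p * c ^ q) := by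
    rw [add_comm p, add_comm q, zpow_add, zpow_add, mul_assoc, ← mul_assoc (b ^ p),
      (commute_b_c.zpow_zpow p s).eq]
    simp only [mul_assoc]
  rw [aConj, aConj, hw]
  group

theorem aConj_add_one_left (p q : ℤ) : aConj (p + 1) q = b⁻¹ * aConj p q * b := by
  simpa [add_comm] using aConj_add 1 0 p q

theorem aConj_add_one_right (p q : ℤ) : aConj p (q + 1) = c⁻¹ * aConj p q * c := by
  simpa [add_comm] using aConj_add 0 1 p q

theorem inv_mul_aConj_pow_mul {g : G₁} {m n : ℕ} (hg : g⁻¹ * a ^ m * g = a ^ n)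
    (hb : Commute g b) (hc : Commute g c) (p q : ℤ) :
    g⁻¹ * aConj p q ^ m * g = aConj p q ^ n := by
  have hw : Commute g (b ^ p * c ^ q) := (hb.zpow_right p).mul_right (hc.zpow_right q)
  rw [aConj, inv_mul_mul_pow, inv_mul_mul_pow, ← hg]
  generalize b ^ p * c ^ q = w at hw
  calc g⁻¹ * (w⁻¹ * a ^ m * w) * g = (g⁻¹ * w⁻¹) * a ^ m * (w * g) := by group
    _ = (w⁻¹ * g⁻¹) * a ^ m * (g * w) := by rw [hw.inv_inv.eq, ← hw.eq]
    _ = w⁻¹ * (g⁻¹ * a ^ m * g) * w := by group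

theorem aConj_add_one_left_sq (p q : ℤ) : aConj (p + 1) q ^ 2 = aConj p q ^ 3 := by
  rw [aConj_add_one_left, inv_mul_mul_pow,
    inv_mul_aConj_pow_mul b_inv_mul_a_sq_mul_b (.refl b) commute_b_c]

theorem aConj_add_one_right_cube (p q : ℤ) : aConj p (q + 1) ^ 3 = aConj p q ^ 5 := by
  rw [aConj_add_one_right, inv_mul_mul_pow,
    inv_mul_aConj_pow_mul c_inv_mul_a_cube_mul_c commute_b_c.symm (.refl c)]

theorem aConj_add_one_add_one_sq (p q : ℤ) : aConj (p + 1) (q + 1) ^ 2 = aConj p q ^ 5 := by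
  rw [aConj_add_one_right, inv_mul_mul_pow, aConj_add_one_left_sq,
    inv_mul_aConj_pow_mul c_inv_mul_a_cube_mul_c commute_b_c.symm (.refl c)]

theorem commute_aConj_iff {p q r s : ℤ} :
    Commute (aConj p q) (aConj r s) ↔ Commute a (aConj (r - p) (s - q)) := by
  have h₁ := aConj_add p q 0 0
  have h₂ := aConj_add p q (r - p) (s - q)
  simp only [add_zero, aConj_zero_zero, add_sub_cancel] at h₁ h₂
  rw [h₁, h₂]
  convert Commute.conj_iff (b ^ p * c ^ q)⁻¹ using 3 <;> rw [inv_inv]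

theorem aConj_one_zero_sq : aConj 1 0 ^ 2 = a ^ 3 := by
  simpa using aConj_add_one_left_sq 0 0

theorem aConj_one_one_sq : aConj 1 1 ^ 2 = a ^ 5 := by
  simpa using aConj_add_one_add_one_sq 0 0

theorem aConj_neg_one_zero_cube : aConj (-1) 0 ^ 3 = a ^ 2 := by
  simpa using (aConj_add_one_left_sq (-1) 0).symm

theorem aConj_neg_one_neg_one_pow_five : aConj (-1) (-1) ^ 5 = a ^ 2 := by
  simpa using (aConj_add_one_add_one_sq (-1) (-1)).symm

theorem commute_a_aConj_neg {p q : ℤ} (h : Commute a (aConj p q)) :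
    Commute a (aConj (-p) (-q)) := by
  simpa using (commute_aConj_iff (p := p) (q := q) (r := 0) (s := 0)).mp (by simpa using h.symm)

theorem commute_a_aConj_of_triangle :
    Commute a (aConj 1 0) ∧ Commute a (aConj 1 1) ∧ Commute a (aConj 0 1) := by
  obtain ⟨h₁₀, h₁₁, h⟩ := pairwise_commute_of_pow_relations aConj_one_zero_sq
    aConj_one_one_sq (by simpa using aConj_add_one_right_cube 1 0)
  exact ⟨h₁₀, h₁₁, by simpa using commute_aConj_iff.mp h⟩

theorem commute_a_of_commute_aConj {z : G₁} (h₁₀ : Commute z (aConj 1 0))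
    (h₁₁ : Commute z (aConj 1 1)) : Commute z a := by
  refine .of_pow_of_pow_of_coprime (m := 3) (n := 5) (by norm_num) ?_ ?_
  · rw [← aConj_one_zero_sq]; exact h₁₀.pow_right 2
  · rw [← aConj_one_one_sq]; exact h₁₁.pow_right 2

theorem commute_a_aConj_one_neg_one : Commute a (aConj 1 (-1)) := by
  obtain ⟨h₁₀, -, h₀₁⟩ := commute_a_aConj_of_triangle
  refine .of_pow_of_pow_of_coprime (m := 2) (n := 5) (by norm_num) ?_ ?_
  · rw [show aConj 1 (-1) ^ 2 = aConj 0 (-1) ^ 3 by simpa using aConj_add_one_left_sq 0 (-1)]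
    exact (by simpa using commute_a_aConj_neg h₀₁ : Commute a (aConj 0 (-1))).pow_right 3
  · rw [show aConj 1 (-1) ^ 5 = aConj 1 0 ^ 3 by simpa using (aConj_add_one_right_cube 1 (-1)).symm]
    exact h₁₀.pow_right 3

theorem commute_a_aConj_two_zero : Commute a (aConj 2 0) := by
  obtain ⟨h₁₀, -, -⟩ := commute_a_aConj_of_triangle
  refine (commute_a_of_commute_aConj ?_ ?_).symm
  · exact commute_aConj_iff.mpr (by simpa using commute_a_aConj_neg h₁₀)
  · exact commute_aConj_iff.mpr (by simpa using commute_a_aConj_neg commute_a_aConj_one_neg_one)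

theorem commute_a_aConj_two_one : Commute a (aConj 2 1) := by
  obtain ⟨h₁₀, h₁₁, -⟩ := commute_a_aConj_of_triangle
  refine (commute_a_of_commute_aConj ?_ ?_).symm
  · exact commute_aConj_iff.mpr (by simpa using commute_a_aConj_neg h₁₁)
  · exact commute_aConj_iff.mpr (by simpa using commute_a_aConj_neg h₁₀)

-- In the model, `3/2 - 2/3 - 2 * (2/5) = 1/30`.
def aRoot : G₁ := aConj 1 0 * (aConj (-1) 0)⁻¹ * (aConj (-1) (-1) ^ 2)⁻¹

theorem pow_aRoot (n : ℕ) :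
    aRoot ^ n = aConj 1 0 ^ n * (aConj (-1) 0 ^ n)⁻¹ * ((aConj (-1) (-1) ^ n) ^ 2)⁻¹ := by
  obtain ⟨-, h₁₁, h₀₁⟩ := commute_a_aConj_of_triangle
  refine mul_inv_mul_sq_inv_pow ?_ ?_ ?_ n <;> refine commute_aConj_iff.mpr ?_
  · simpa using commute_a_aConj_neg commute_a_aConj_two_zero
  · simpa using commute_a_aConj_neg commute_a_aConj_two_one
  · simpa using commute_a_aConj_neg h₀₁

theorem aRoot_pow_thirty : aRoot ^ 30 = a := by
  have hu : aConj 1 0 ^ 30 = a ^ 45 := by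
    rw [show 30 = 2 * 15 from rfl, pow_mul, aConj_one_zero_sq, ← pow_mul]
  have hv : aConj (-1) 0 ^ 30 = a ^ 20 := by
    rw [show 30 = 3 * 10 from rfl, pow_mul, aConj_neg_one_zero_cube, ← pow_mul]
  have hk : (aConj (-1) (-1) ^ 30) ^ 2 = a ^ 24 := by
    rw [← pow_mul, show 30 * 2 = 5 * 12 from rfl, pow_mul, aConj_neg_one_neg_one_pow_five,
      ← pow_mul]
  rw [pow_aRoot, hu, hv, hk]
  group

theorem inv_mul_aRoot_pow_mul {g : G₁} {m n : ℕ} (hg : g⁻¹ * a ^ m * g = a ^ n)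
    (hb : Commute g b) (hc : Commute g c) : g⁻¹ * aRoot ^ m * g = aRoot ^ n := by
  rw [pow_aRoot, pow_aRoot, ← inv_mul_aConj_pow_mul hg hb hc 1 0,
    ← inv_mul_aConj_pow_mul hg hb hc (-1) 0, ← inv_mul_aConj_pow_mul hg hb hc (-1) (-1),
    inv_mul_mul_pow]
  group

def powEnd (k : ℕ) : G₁ →* G₁ :=
  lift (inv_mul_pow_pow_mul b_inv_mul_a_sq_mul_b k) (inv_mul_pow_pow_mul c_inv_mul_a_cube_mul_c k)
    (inv_mul_pow_pow_mul d_inv_mul_a_pow_five_mul_d k) commute_b_c commute_c_d commute_d_b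

@[simp] theorem powEnd_a (k : ℕ) : powEnd k a = a ^ k := lift_a ..
@[simp] theorem powEnd_b (k : ℕ) : powEnd k b = b := lift_b ..
@[simp] theorem powEnd_c (k : ℕ) : powEnd k c = c := lift_c ..
@[simp] theorem powEnd_d (k : ℕ) : powEnd k d = d := lift_d ..

theorem powEnd_aConj (k : ℕ) (p q : ℤ) : powEnd k (aConj p q) = aConj p q ^ k := by
  simp only [aConj, map_mul, map_inv, map_zpow, powEnd_a, powEnd_b, powEnd_c]
  exact (inv_mul_mul_pow ..).symm

def rootHom : G₁ →* G₁ :=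
  lift (inv_mul_aRoot_pow_mul b_inv_mul_a_sq_mul_b (.refl b) commute_b_c)
    (inv_mul_aRoot_pow_mul c_inv_mul_a_cube_mul_c commute_b_c.symm (.refl c))
    (inv_mul_aRoot_pow_mul d_inv_mul_a_pow_five_mul_d commute_d_b commute_c_d.symm)
    commute_b_c commute_c_d commute_d_b

theorem powEnd_thirty_aRoot : powEnd 30 aRoot = a := by
  rw [aRoot, map_mul, map_mul, map_inv, map_inv, map_pow, powEnd_aConj, powEnd_aConj,
    powEnd_aConj, ← pow_aRoot, aRoot_pow_thirty]

def powThirtyEquiv : G₁ ≃* G₁ :=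
  MonoidHom.toMulEquiv (powEnd 30) rootHom
    (hom_ext (by simp [rootHom, aRoot_pow_thirty]) (by simp [rootHom]) (by simp [rootHom])
      (by simp [rootHom]))
    (hom_ext (by simp [rootHom, powEnd_thirty_aRoot]) (by simp [rootHom]) (by simp [rootHom])
      (by simp [rootHom]))

theorem powEnd_thirty_a_mem : powEnd 30 a ∈ Subgroup.zpowers a := by
  rw [powEnd_a]; exact Subgroup.npow_mem_zpowers a 30

theorem a_mem_zpowersIterPreimage : a ∈ zpowersIterPreimage (powEnd 30) a :=
  (mem_zpowersIterPreimage_iff powEnd_thirty_a_mem).mpr ⟨0, Subgroup.mem_zpowers a⟩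

theorem mem_normalizer_zpowersIterPreimage_of_conj {g : G₁} {m n : ℕ} (hg : powEnd 30 g = g)
    (h : g⁻¹ * a ^ m * g = a ^ n) (hm : m ∣ 30) (hn : n ∣ 30) :
    g ∈ Subgroup.normalizer (zpowersIterPreimage (powEnd 30) a : Set G₁) := by
  obtain ⟨h₂, h₁⟩ := conj_pow_mem_zpowers h hm hn
  exact mem_normalizer_zpowersIterPreimage powEnd_thirty_a_mem hg (by rwa [powEnd_a])
    (by rwa [powEnd_a])

theorem normal_zpowersIterPreimage : (zpowersIterPreimage (powEnd 30) a).Normal := by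
  rw [← Subgroup.normalizer_eq_top_iff, eq_top_iff]
  refine fun x _ => PresentedGroup.generated_by _ _ (fun i => ?_) x
  fin_cases i
  · exact Subgroup.le_normalizer a_mem_zpowersIterPreimage
  · exact mem_normalizer_zpowersIterPreimage_of_conj (powEnd_b 30) b_inv_mul_a_sq_mul_b
      (by norm_num) (by norm_num)
  · exact mem_normalizer_zpowersIterPreimage_of_conj (powEnd_c 30) c_inv_mul_a_cube_mul_c
      (by norm_num) (by norm_num)
  · exact mem_normalizer_zpowersIterPreimage_of_conj (powEnd_d 30) d_inv_mul_a_pow_five_mul_d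
      (by norm_num) (by norm_num)

theorem commutator_le_zpowersIterPreimage :
    commutator G₁ ≤ zpowersIterPreimage (powEnd 30) a := by
  have := normal_zpowersIterPreimage
  refine Subgroup.Normal.commutator_le_of_self_sup_commutative_eq_top
    (H := Subgroup.closure {b, c, d}) ?_ (Subgroup.isMulCommutative_closure ?_)
  · refine eq_top_iff.mpr fun x _ => PresentedGroup.generated_by _ _ (fun i => ?_) x
    fin_cases i
    · exact Subgroup.mem_sup_left a_mem_zpowersIterPreimage
    all_goals exact Subgroup.mem_sup_right (Subgroup.subset_closure (by simp [b, c, d]))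
  · simp only [Set.mem_insert_iff, Set.mem_singleton_iff]
    rintro x (rfl | rfl | rfl) y (rfl | rfl | rfl) <;>
      simp [commute_b_c.eq, commute_c_d.eq, commute_d_b.eq]

theorem isMetabelian : IsMetabelian G₁ :=
  isMetabelian_of_commutator_le
    (fun _ hx _ hy => commute_of_mem_zpowersIterPreimage powEnd_thirty_a_mem
      powThirtyEquiv.injective hx hy)
    commutator_le_zpowersIterPreimage

end G₁

/-- The group `G₁` above is metabelian, and the assignments `a ↦ a³⁰`,
`b ↦ b`, `c ↦ c`, `d ↦ d` determine an automorphism of `G₁`. -/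
theorem G1_metabelian_and_automorphism :
    IsMetabelian (PresentedGroup G1Rels) ∧
      ∃ e : PresentedGroup G1Rels ≃* PresentedGroup G1Rels,
        e (PresentedGroup.of 0) = (PresentedGroup.of 0 : PresentedGroup G1Rels) ^ (30 : ℕ) ∧
        e (PresentedGroup.of 1) = (PresentedGroup.of 1 : PresentedGroup G1Rels) ∧
        e (PresentedGroup.of 2) = (PresentedGroup.of 2 : PresentedGroup G1Rels) ∧
        e (PresentedGroup.of 3) = (PresentedGroup.of 3 : PresentedGroup G1Rels) :=
  ⟨G₁.isMetabelian, G₁.powThirtyEquiv, G₁.powEnd_a 30, G₁.powEnd_b 30, G₁.powEnd_c 30,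
    G₁.powEnd_d 30⟩
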